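/- Let each T'_j be Borel measurable and let μ ∈ 𝒫₂(E). Then the Wasserstein distance between μ and its one-step image under the Markov operator is controlled by the fixed-point residual of T_1: d_{W2,p}(μ𝒫, μ)² ≤ ∫ ‖x − T_1 x‖² dμ(x), where T_1 x = (T'_1(x),…,T'_m(x)) is the map using all blocks. If, in addition, C := {x ∈ E : T_i x = x for every i with η_i > 0} is nonempty and every invariant measure in 𝒫₂(E) has support contained in C, then Ψ(μ) = (∫ ‖x − T_1 x‖² dμ(x))^{1/2}, and consequently Ψ(μ) ≥ d_{W2,p}(μ𝒫, μ). -/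

import Mathlib

/-!
Moving `x` to `Tᵢ x` with probability `ηᵢ` couples `μ𝒫` with `μ` at cost
`∫ ∑ᵢ ηᵢ ‖x - Tᵢ x‖ₚ² dμ`. Block `j` of `x - Tᵢ x` is `xⱼ - T'ⱼ x` if `j ∈ Mᵢ` and `0` otherwise,
and `∑_{i ∋ j} ηᵢ = pⱼ`, so this cost is `∫ ‖x - T₁ x‖² dμ`.

In the consistent case a Dirac mass at a point of `C` is invariant, and every invariant `π` lives
on `C`, where `Tᵢ y = y` whenever `ηᵢ > 0`. Hence for any coupling `γ` of `μ` and `π` the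
discrepancy integrand reduces to `∑ᵢ ηᵢ ‖x - Tᵢ x‖ₚ²`, and all candidates in the infimum
defining `Ψ(μ)` take the value `(∫ ‖x - T₁ x‖² dμ)^{1/2}`.
-/

open Finset MeasureTheory Filter
open scoped RealInnerProductSpace

noncomputable section

variable {m : ℕ} {I : Type*} [Fintype I]
variable {E : Fin m → Type*} [∀ j, NormedAddCommGroup (E j)]
  [∀ j, InnerProductSpace ℝ (E j)] [∀ j, FiniteDimensional ℝ (E j)]
variable [∀ j, MeasurableSpace (E j)] [∀ j, BorelSpace (E j)]
variable [MeasurableSpace (PiLp 2 E)] [BorelSpace (PiLp 2 E)]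

/-- The blockwise map `T_i`: applies `T'_j` on the blocks `j ∈ M i`, identity elsewhere. -/
def blockMap (M : I → Finset (Fin m)) (T' : ∀ j, PiLp 2 E → E j)
    (i : I) (x : PiLp 2 E) : PiLp 2 E :=
  WithLp.toLp 2 (fun j => if j ∈ M i then T' j x else x j)

/-- The squared weighted norm `‖z‖_p²  =  ∑ⱼ pⱼ⁻¹ ‖zⱼ‖²`. -/
def wNormSq (pw : Fin m → ℝ) (z : PiLp 2 E) : ℝ :=
  ∑ j, (pw j)⁻¹ * ‖z j‖ ^ 2

/-- The weighted norm `‖z‖_p`. -/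
def wNorm (pw : Fin m → ℝ) (z : PiLp 2 E) : ℝ :=
  Real.sqrt (wNormSq pw z)

/-- `γ` is a coupling of `μ` and `ν`. -/
def IsCoupling (γ : Measure (PiLp 2 E × PiLp 2 E)) (μ ν : Measure (PiLp 2 E)) : Prop :=
  IsProbabilityMeasure γ ∧ γ.map Prod.fst = μ ∧ γ.map Prod.snd = ν

/-- The transport cost `(∫ ‖x−y‖_p² dγ)^{1/2}` of a coupling `γ`. -/
def couplingCost (pw : Fin m → ℝ) (γ : Measure (PiLp 2 E × PiLp 2 E)) : ℝ :=
  Real.sqrt (∫ z, wNormSq pw (z.1 - z.2) ∂γ)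

/-- The weighted Wasserstein-2 distance `d_{W2,p}`. -/
def W2 (pw : Fin m → ℝ) (μ ν : Measure (PiLp 2 E)) : ℝ :=
  sInf {r | ∃ γ, IsCoupling γ μ ν ∧ r = couplingCost pw γ}

/-- `γ` is an optimal coupling of `(μ, ν)` w.r.t. `d_{W2,p}`. -/
def IsOptimalCoupling (pw : Fin m → ℝ) (γ : Measure (PiLp 2 E × PiLp 2 E))
    (μ ν : Measure (PiLp 2 E)) : Prop :=
  IsCoupling γ μ ν ∧ couplingCost pw γ = W2 pw μ ν

/-- The Markov operator `μ ↦ μ𝒫 = ∑ᵢ ηᵢ (Tᵢ)_* μ`. -/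
def markovOp (η : I → ℝ) (T : I → PiLp 2 E → PiLp 2 E)
    (μ : Measure (PiLp 2 E)) : Measure (PiLp 2 E) :=
  ∑ i : I, (ENNReal.ofReal (η i)) • μ.map (T i)

/-- `μ ∈ 𝒫₂(G)` : Borel probability measure concentrated on `G` with finite second moment. -/
def MemP2 (G : Set (PiLp 2 E)) (μ : Measure (PiLp 2 E)) : Prop :=
  IsProbabilityMeasure μ ∧ μ Gᶜ = 0 ∧ Integrable (fun x => ‖x‖ ^ 2) μ

/-- `d_{W2,p}(μ, inv𝒫)` : distance from `μ` to the invariant measures in `𝒫₂(G)`. -/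
def dInv (pw : Fin m → ℝ) (η : I → ℝ) (T : I → PiLp 2 E → PiLp 2 E)
    (G : Set (PiLp 2 E)) (μ : Measure (PiLp 2 E)) : ℝ :=
  sInf {r | ∃ π, markovOp η T π = π ∧ MemP2 G π ∧ r = W2 pw μ π}

/-- The expected weighted transport discrepancy `∑ᵢ ηᵢ ψ_p(x, y, Tᵢx, Tᵢy)`. -/
def discrep (pw : Fin m → ℝ) (η : I → ℝ) (T : I → PiLp 2 E → PiLp 2 E)
    (z : PiLp 2 E × PiLp 2 E) : ℝ :=
  ∑ i : I, η i * wNormSq pw ((z.1 - T i z.1) - (z.2 - T i z.2))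

/-- The invariant Markov transport discrepancy `Ψ`. -/
def Psi (pw : Fin m → ℝ) (η : I → ℝ) (T : I → PiLp 2 E → PiLp 2 E)
    (G : Set (PiLp 2 E)) (μ : Measure (PiLp 2 E)) : ℝ :=
  sInf {r | ∃ π γ, markovOp η T π = π ∧ MemP2 G π ∧ IsOptimalCoupling pw γ μ π ∧
    r = Real.sqrt (∫ z, discrep pw η T z ∂γ)}

end

section WeightedNorm

variable {m : ℕ} {E : Fin m → Type*} [∀ j, NormedAddCommGroup (E j)]

lemma wNormSq_nonneg {pw : Fin m → ℝ} (hpw : ∀ j, 0 ≤ pw j) (z : PiLp 2 E) :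
    0 ≤ wNormSq pw z :=
  Finset.sum_nonneg fun j _ => mul_nonneg (inv_nonneg.2 (hpw j)) (sq_nonneg _)

lemma wNormSq_sub_comm (pw : Fin m → ℝ) (x y : PiLp 2 E) :
    wNormSq pw (x - y) = wNormSq pw (y - x) := by
  simp only [wNormSq, PiLp.sub_apply, norm_sub_rev]

lemma continuous_wNormSq (pw : Fin m → ℝ) : Continuous (wNormSq (E := E) pw) :=
  continuous_finsetSum _ fun j _ =>
    continuous_const.mul ((PiLp.continuous_apply 2 E j).norm.pow 2)

lemma sub_blockMap_apply {I : Type*} (M : I → Finset (Fin m)) (T' : ∀ j, PiLp 2 E → E j)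
    (i : I) (x : PiLp 2 E) (j : Fin m) :
    (x - blockMap M T' i x) j = if j ∈ M i then x j - T' j x else 0 := by
  simp only [PiLp.sub_apply, blockMap]
  split_ifs <;> simp

/-- Summing over `i` first, block `j` collects the weight `∑_{i ∋ j} ηᵢ = pⱼ`, which cancels
its factor `pⱼ⁻¹`. -/
lemma sum_mul_wNormSq_sub_blockMap {I : Type*} [Fintype I] (M : I → Finset (Fin m)) (i₁ : I)
    (hi₁ : M i₁ = Finset.univ) (η : I → ℝ) (pw : Fin m → ℝ)
    (hpw : ∀ j, pw j = ∑ i : I, if j ∈ M i then η i else 0) (hp : ∀ j, pw j ≠ 0)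
    (T' : ∀ j, PiLp 2 E → E j) (x : PiLp 2 E) :
    ∑ i : I, η i * wNormSq pw (x - blockMap M T' i x) = ‖x - blockMap M T' i₁ x‖ ^ 2 := by
  rw [PiLp.norm_sq_eq_of_L2]
  simp only [wNormSq, Finset.mul_sum]
  rw [Finset.sum_comm]
  refine Finset.sum_congr rfl fun j _ => ?_
  calc ∑ i : I, η i * ((pw j)⁻¹ * ‖(x - blockMap M T' i x) j‖ ^ 2)
      = (∑ i : I, if j ∈ M i then η i else 0) * (pw j)⁻¹ * ‖x j - T' j x‖ ^ 2 := by
        rw [Finset.sum_mul, Finset.sum_mul]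
        refine Finset.sum_congr rfl fun i _ => ?_
        rw [sub_blockMap_apply]
        split_ifs <;> simp [mul_assoc]
    _ = ‖(x - blockMap M T' i₁ x) j‖ ^ 2 := by
        rw [← hpw j, mul_inv_cancel₀ (hp j), one_mul, sub_blockMap_apply, hi₁, if_pos (mem_univ j)]

end WeightedNorm

lemma csInf_eq_of_forall_eq {α : Type*} [ConditionallyCompleteLattice α] {s : Set α} {a : α}
    (hne : s.Nonempty) (h : ∀ r ∈ s, r = a) :
    sInf s = a := by
  rw [Set.eq_singleton_iff_nonempty_unique_mem.2 ⟨hne, h⟩, csInf_singleton]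

section Coupling

variable {m : ℕ} {E : Fin m → Type*} [MeasurableSpace (PiLp 2 E)]
  {γ : Measure (PiLp 2 E × PiLp 2 E)} {μ ν : Measure (PiLp 2 E)}

lemma isCoupling_prod (μ ν : Measure (PiLp 2 E)) [IsProbabilityMeasure μ]
    [IsProbabilityMeasure ν] : IsCoupling (μ.prod ν) μ ν :=
  ⟨inferInstance, by simp, by simp⟩

lemma IsCoupling.integral_comp_fst (hγ : IsCoupling γ μ ν) {g : PiLp 2 E → ℝ}
    (hg : AEStronglyMeasurable g μ) : ∫ z, g z.1 ∂γ = ∫ x, g x ∂μ := by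
  obtain ⟨-, hfst, -⟩ := hγ
  subst hfst
  exact (integral_map measurable_fst.aemeasurable hg).symm

lemma IsCoupling.ae_snd (hγ : IsCoupling γ μ ν) {p : PiLp 2 E → Prop} (hp : ∀ᵐ y ∂ν, p y) :
    ∀ᵐ z ∂γ, p z.2 := by
  obtain ⟨-, -, hsnd⟩ := hγ
  subst hsnd
  exact ae_of_ae_map measurable_snd.aemeasurable hp

variable [∀ j, NormedAddCommGroup (E j)] {pw : Fin m → ℝ}

lemma W2_nonneg : 0 ≤ W2 pw μ ν :=
  Real.sInf_nonneg <| by rintro _ ⟨γ, -, rfl⟩; exact Real.sqrt_nonneg _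

lemma IsCoupling.W2_le_couplingCost (hγ : IsCoupling γ μ ν) : W2 pw μ ν ≤ couplingCost pw γ :=
  csInf_le ⟨0, by rintro _ ⟨γ, -, rfl⟩; exact Real.sqrt_nonneg _⟩ ⟨γ, hγ, rfl⟩

variable [BorelSpace (PiLp 2 E)]

lemma IsCoupling.couplingCost_dirac {c : PiLp 2 E} (hγ : IsCoupling γ μ (Measure.dirac c)) :
    couplingCost pw γ = √(∫ x, wNormSq pw (x - c) ∂μ) := by
  have hsnd : ∀ᵐ z ∂γ, z.2 = c := hγ.ae_snd (p := (· = c)) (by simp [ae_dirac_eq])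
  rw [couplingCost, integral_congr_ae (g := fun z => wNormSq pw (z.1 - c))
    (hsnd.mono fun z hz => by simp only [hz]),
    hγ.integral_comp_fst (g := fun x => wNormSq pw (x - c))
      ((continuous_wNormSq pw).comp (continuous_sub_right c)).aestronglyMeasurable]

/-- Every coupling with a Dirac mass is the product one, so all have the same cost. -/
lemma isOptimalCoupling_prod_dirac (pw : Fin m → ℝ) (μ : Measure (PiLp 2 E))
    [IsProbabilityMeasure μ] (c : PiLp 2 E) :
    IsOptimalCoupling pw (μ.prod (Measure.dirac c)) μ (Measure.dirac c) := by
  have hprod := isCoupling_prod μ (Measure.dirac c)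
  refine ⟨hprod, ?_⟩
  unfold W2
  symm
  refine csInf_eq_of_forall_eq ⟨_, _, hprod, rfl⟩ ?_
  rintro _ ⟨γ, hγ, rfl⟩
  rw [hγ.couplingCost_dirac, hprod.couplingCost_dirac]

end Coupling

section Markov

variable {m : ℕ} {I : Type*} [Fintype I] {E : Fin m → Type*} [MeasurableSpace (PiLp 2 E)]

noncomputable def markovCoupling (η : I → ℝ) (T : I → PiLp 2 E → PiLp 2 E)
    (μ : Measure (PiLp 2 E)) : Measure (PiLp 2 E × PiLp 2 E) :=
  ∑ i : I, ENNReal.ofReal (η i) • μ.map fun x => (T i x, x)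

variable {η : I → ℝ} {T : I → PiLp 2 E → PiLp 2 E}

lemma sum_ofReal_eq_one (hη : ∀ i, 0 ≤ η i) (hηsum : ∑ i, η i = 1) :
    ∑ i, ENNReal.ofReal (η i) = 1 := by
  rw [← ENNReal.ofReal_sum_of_nonneg fun i _ => hη i, hηsum, ENNReal.ofReal_one]

lemma isCoupling_markovCoupling (hη : ∀ i, 0 ≤ η i) (hηsum : ∑ i, η i = 1)
    (hT : ∀ i, Measurable (T i)) (μ : Measure (PiLp 2 E)) [IsProbabilityMeasure μ] :
    IsCoupling (markovCoupling η T μ) (markovOp η T μ) μ := by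
  have hpair i : Measurable fun x => (T i x, x) := (hT i).prodMk measurable_id
  have hsnd : (markovCoupling η T μ).map Prod.snd = μ := by
    simp only [markovCoupling, Measure.map_finset_sum' measurable_snd.aemeasurable,
      Measure.map_smul, Measure.map_map measurable_snd (hpair _), Function.comp_def,
      Measure.map_id']
    rw [← Finset.sum_smul, sum_ofReal_eq_one hη hηsum, one_smul]
  have hfst : (markovCoupling η T μ).map Prod.fst = markovOp η T μ := by
    simp only [markovCoupling, markovOp, Measure.map_finset_sum' measurable_fst.aemeasurable,
      Measure.map_smul, Measure.map_map measurable_fst (hpair _)]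
    rfl
  refine ⟨⟨?_⟩, hfst, hsnd⟩
  simpa [Measure.map_apply measurable_snd MeasurableSet.univ] using congrArg (· Set.univ) hsnd

lemma integral_markovCoupling (hη : ∀ i, 0 ≤ η i) (hT : ∀ i, Measurable (T i))
    (μ : Measure (PiLp 2 E)) {f : PiLp 2 E × PiLp 2 E → ℝ} (hf : Measurable f)
    (hf₀ : ∀ z, 0 ≤ f z) :
    ∫ z, f z ∂markovCoupling η T μ = ∫ x, ∑ i, η i * f (T i x, x) ∂μ := by
  have hpair i : Measurable fun x => (T i x, x) := (hT i).prodMk measurable_id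
  have hterm i : Measurable fun x => ENNReal.ofReal (f (T i x, x)) :=
    hf.ennreal_ofReal.comp (hpair i)
  have hsum : Measurable fun x => ∑ i, η i * f (T i x, x) :=
    Finset.measurable_sum _ fun i _ => measurable_const.mul (hf.comp (hpair i))
  rw [integral_eq_lintegral_of_nonneg_ae (ae_of_all _ hf₀) hf.aestronglyMeasurable,
    integral_eq_lintegral_of_nonneg_ae
      (ae_of_all _ fun x => Finset.sum_nonneg fun i _ => mul_nonneg (hη i) (hf₀ _))
      hsum.aestronglyMeasurable]
  congr 1
  simp only [markovCoupling, lintegral_finsetSum_measure, lintegral_smul_measure,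
    lintegral_map hf.ennreal_ofReal (hpair _), smul_eq_mul]
  simp only [ENNReal.ofReal_sum_of_nonneg fun i _ => mul_nonneg (hη i) (hf₀ _),
    ENNReal.ofReal_mul (hη _)]
  rw [lintegral_finsetSum _ fun i _ => (hterm i).const_mul _]
  simp only [lintegral_const_mul _ (hterm _)]

lemma markovOp_dirac_eq_self (hη : ∀ i, 0 ≤ η i) (hηsum : ∑ i, η i = 1)
    (hT : ∀ i, Measurable (T i))
    {c : PiLp 2 E} (hc : ∀ i, 0 < η i → T i c = c) :
    markovOp η T (Measure.dirac c) = Measure.dirac c := by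
  have hterm i : ENNReal.ofReal (η i) • (Measure.dirac c).map (T i)
      = ENNReal.ofReal (η i) • Measure.dirac c := by
    rcases (hη i).eq_or_lt with h | h
    · simp [← h]
    · rw [Measure.map_dirac' (hT i), hc i h]
  rw [markovOp, Finset.sum_congr rfl fun i _ => hterm i, ← Finset.sum_smul,
    sum_ofReal_eq_one hη hηsum, one_smul]

variable [∀ j, NormedAddCommGroup (E j)] [BorelSpace (PiLp 2 E)]

lemma memP2_dirac (c : PiLp 2 E) : MemP2 Set.univ (Measure.dirac c) :=
  ⟨inferInstance, by simp, integrable_dirac enorm_lt_top⟩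

variable [MeasurableSub₂ (PiLp 2 E)]

lemma measurable_sum_mul_wNormSq_sub (hT : ∀ i, Measurable (T i)) (pw : Fin m → ℝ) :
    Measurable fun x => ∑ i, η i * wNormSq pw (x - T i x) :=
  Finset.measurable_sum _ fun i _ =>
    measurable_const.mul ((continuous_wNormSq pw).measurable.comp (measurable_id.sub (hT i)))

lemma sq_W2_markovOp_le (hη : ∀ i, 0 ≤ η i) (hηsum : ∑ i, η i = 1)
    (hT : ∀ i, Measurable (T i)) {pw : Fin m → ℝ} (hpw : ∀ j, 0 ≤ pw j)
    (μ : Measure (PiLp 2 E)) [IsProbabilityMeasure μ] :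
    W2 pw (markovOp η T μ) μ ^ 2 ≤ ∫ x, ∑ i, η i * wNormSq pw (x - T i x) ∂μ := by
  have hcost : couplingCost pw (markovCoupling η T μ)
      = √(∫ x, ∑ i, η i * wNormSq pw (x - T i x) ∂μ) := by
    rw [couplingCost, integral_markovCoupling hη hT μ (f := fun z => wNormSq pw (z.1 - z.2))
      ((continuous_wNormSq pw).measurable.comp (measurable_fst.sub measurable_snd))
      fun z => wNormSq_nonneg hpw _]
    simp only [wNormSq_sub_comm pw (T _ _)]
  calc W2 pw (markovOp η T μ) μ ^ 2 ≤ couplingCost pw (markovCoupling η T μ) ^ 2 :=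
        pow_le_pow_left₀ W2_nonneg
          (isCoupling_markovCoupling hη hηsum hT μ).W2_le_couplingCost 2
    _ = ∫ x, ∑ i, η i * wNormSq pw (x - T i x) ∂μ := by
        rw [hcost, Real.sq_sqrt (integral_nonneg fun x =>
          Finset.sum_nonneg fun i _ => mul_nonneg (hη i) (wNormSq_nonneg hpw _))]

/-- On the fixed points of the active maps the `y`-part of the discrepancy vanishes. -/
lemma integral_discrep_of_isCoupling (hη : ∀ i, 0 ≤ η i) (hT : ∀ i, Measurable (T i))
    (pw : Fin m → ℝ) {γ : Measure (PiLp 2 E × PiLp 2 E)} {μ π : Measure (PiLp 2 E)}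
    (hγ : IsCoupling γ μ π) (hπ : ∀ᵐ y ∂π, ∀ i, 0 < η i → T i y = y) :
    ∫ z, discrep pw η T z ∂γ = ∫ x, ∑ i, η i * wNormSq pw (x - T i x) ∂μ := by
  have hfix : discrep pw η T =ᵐ[γ] fun z => ∑ i, η i * wNormSq pw (z.1 - T i z.1) := by
    filter_upwards [hγ.ae_snd hπ] with z hz
    refine Finset.sum_congr rfl fun i _ => ?_
    rcases (hη i).eq_or_lt with h | h
    · simp [← h]
    · rw [hz i h, sub_self, sub_zero]
  rw [integral_congr_ae hfix,
    hγ.integral_comp_fst (measurable_sum_mul_wNormSq_sub hT pw).aestronglyMeasurable]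

lemma Psi_eq_sqrt_integral (hη : ∀ i, 0 ≤ η i) (hηsum : ∑ i, η i = 1)
    (hT : ∀ i, Measurable (T i)) (pw : Fin m → ℝ) (μ : Measure (PiLp 2 E))
    [IsProbabilityMeasure μ] {c : PiLp 2 E} (hc : ∀ i, 0 < η i → T i c = c)
    (hinv : ∀ π, markovOp η T π = π → MemP2 Set.univ π →
      ∀ᵐ y ∂π, ∀ i, 0 < η i → T i y = y) :
    Psi pw η T Set.univ μ = √(∫ x, ∑ i, η i * wNormSq pw (x - T i x) ∂μ) := by
  unfold Psi
  refine csInf_eq_of_forall_eq ⟨_, Measure.dirac c, μ.prod (Measure.dirac c),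
    markovOp_dirac_eq_self hη hηsum hT hc, memP2_dirac c, isOptimalCoupling_prod_dirac pw μ c,
    rfl⟩ ?_
  rintro _ ⟨π, γ, hπ, hπP2, ⟨hγ, -⟩, rfl⟩
  rw [integral_discrep_of_isCoupling hη hT pw hγ (hinv π hπ hπP2)]

end Markov

lemma measurable_blockMap {m : ℕ} {I : Type*} {E : Fin m → Type*}
    [∀ j, NormedAddCommGroup (E j)] [∀ j, MeasurableSpace (E j)] [∀ j, BorelSpace (E j)]
    [∀ j, SecondCountableTopology (E j)] [MeasurableSpace (PiLp 2 E)] [BorelSpace (PiLp 2 E)]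
    (M : I → Finset (Fin m)) {T' : ∀ j, PiLp 2 E → E j} (hT' : ∀ j, Measurable (T' j)) (i : I) :
    Measurable (blockMap M T' i) := by
  refine (PiLp.continuous_toLp 2 E).measurable.comp (measurable_pi_lambda _ fun j => ?_)
  by_cases h : j ∈ M i
  · simpa [h] using hT' j
  · simpa [h] using (PiLp.continuous_apply 2 E j).measurable

variable {m : ℕ} {I : Type*} [Fintype I]
variable {E : Fin m → Type*} [∀ j, NormedAddCommGroup (E j)]
  [∀ j, InnerProductSpace ℝ (E j)] [∀ j, FiniteDimensional ℝ (E j)]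
variable [∀ j, MeasurableSpace (E j)] [∀ j, BorelSpace (E j)]
variable [MeasurableSpace (PiLp 2 E)] [BorelSpace (PiLp 2 E)]

theorem statement14_general
    (M : I → Finset (Fin m))
    (i₁ : I) (hi₁ : M i₁ = Finset.univ)
    (η : I → ℝ) (hη : ∀ i, 0 ≤ η i) (hηsum : ∑ i : I, η i = 1)
    (pw : Fin m → ℝ) (hpw : ∀ j, pw j = ∑ i : I, if j ∈ M i then η i else 0)
    (hp : ∀ j, 0 < pw j)
    (T' : ∀ j, PiLp 2 E → E j) (hmeas : ∀ j, Measurable (T' j))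
    (C : Set (PiLp 2 E))
    (hC : C = {x : PiLp 2 E | ∀ i, 0 < η i → blockMap M T' i x = x})
    (μ : Measure (PiLp 2 E)) (hμ : MemP2 Set.univ μ) :
    (W2 pw (markovOp η (blockMap M T') μ) μ) ^ 2
      ≤ ∫ x, ‖x - blockMap M T' i₁ x‖ ^ 2 ∂μ
    ∧ (C.Nonempty →
        (∀ π : Measure (PiLp 2 E), markovOp η (blockMap M T') π = π →
          MemP2 Set.univ π → π Cᶜ = 0) →
        Psi pw η (blockMap M T') Set.univ μ
            = Real.sqrt (∫ x, ‖x - blockMap M T' i₁ x‖ ^ 2 ∂μ)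
          ∧ W2 pw (markovOp η (blockMap M T') μ) μ
              ≤ Psi pw η (blockMap M T') Set.univ μ) := by
  subst hC
  have : IsProbabilityMeasure μ := hμ.1
  have hT := measurable_blockMap M hmeas
  have hresidual : (fun x => ∑ i, η i * wNormSq pw (x - blockMap M T' i x))
      = fun x => ‖x - blockMap M T' i₁ x‖ ^ 2 :=
    funext <| sum_mul_wNormSq_sub_blockMap M i₁ hi₁ η pw hpw (fun j => (hp j).ne') T'
  have hW2 := sq_W2_markovOp_le hη hηsum hT (fun j => (hp j).le) μ
  rw [hresidual] at hW2
  refine ⟨hW2, fun ⟨c, hc⟩ hinv => ?_⟩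
  have hPsi := Psi_eq_sqrt_integral hη hηsum hT pw μ hc fun π hπ hπP2 =>
    mem_ae_iff.2 (hinv π hπ hπP2)
  rw [hresidual] at hPsi
  exact ⟨hPsi, hPsi ▸ (le_abs_self _).trans (Real.abs_le_sqrt hW2)⟩

/-- the Wasserstein distance between `μ` and `μ𝒫` is controlled by the fixed-point
residual of `T₁`; in the consistent case `Ψ(μ)` equals the root-mean-square residual, hence
dominates `d_{W2,p}(μ𝒫, μ)`. -/
theorem statement14
    (M : I → Finset (Fin m)) (hM : ∀ i, (M i).Nonempty)
    (i₁ : I) (hi₁ : M i₁ = Finset.univ)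
    (η : I → ℝ) (hη : ∀ i, 0 ≤ η i) (hηsum : ∑ i : I, η i = 1)
    (pw : Fin m → ℝ) (hpw : ∀ j, pw j = ∑ i : I, if j ∈ M i then η i else 0)
    (hp : ∀ j, 0 < pw j)
    (T' : ∀ j, PiLp 2 E → E j) (hmeas : ∀ j, Measurable (T' j))
    (C : Set (PiLp 2 E))
    (hC : C = {x : PiLp 2 E | ∀ i, 0 < η i → blockMap M T' i x = x})
    (μ : Measure (PiLp 2 E)) (hμ : MemP2 Set.univ μ) :
    (W2 pw (markovOp η (blockMap M T') μ) μ) ^ 2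
      ≤ ∫ x, ‖x - blockMap M T' i₁ x‖ ^ 2 ∂μ
    ∧ (C.Nonempty →
        (∀ π : Measure (PiLp 2 E), markovOp η (blockMap M T') π = π →
          MemP2 Set.univ π → π Cᶜ = 0) →
        Psi pw η (blockMap M T') Set.univ μ
            = Real.sqrt (∫ x, ‖x - blockMap M T' i₁ x‖ ^ 2 ∂μ)
          ∧ W2 pw (markovOp η (blockMap M T') μ) μ
              ≤ Psi pw η (blockMap M T') Set.univ μ) :=
  statement14_general M i₁ hi₁ η hη hηsum pw hpw hp T' hmeas C hC μ hμ
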